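/- arXiv:1104.1491 — 6 statements merged into one kernel-verified Lean document; each statement's English description precedes it below -/
import Mathlib

section
/- Let θ and κ be infinite cardinals, let ⟨μ_j : j < θ⟩ be an increasing sequence of cardinals with limit λ, let D be a (κ,θ)-weakly normal ultrafilter on κ with witnessing function g : κ → θ, and set λ_i = μ_{g(i)} for every i < κ. Then λ = lim_D(⟨λ_i : i < κ⟩). -/
universe u

open Cardinal Set

/-- Members of the product `∏_{i} λ_i`: functions choosing an ordinal below `(λ i).ord`
for every index `i`. -/
def ProdFun {ι : Type u} (lam : ι → Cardinal.{u}) : Type (u + 1) :=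
  {f : ι → Ordinal.{u} // ∀ i, f i < (lam i).ord}

/-- `D`-equality of members of the product. -/
def prodEquiv {ι : Type u} (D : Ultrafilter ι) (lam : ι → Cardinal.{u})
    (f g : ProdFun lam) : Prop :=
  {i | f.1 i = g.1 i} ∈ D

/-- The reduced product `∏_{i} λ_i / D`. -/
def ProdQuot {ι : Type u} (D : Ultrafilter ι) (lam : ι → Cardinal.{u}) : Type (u + 1) :=
  Quot (prodEquiv D lam)

/-- The cardinality of the reduced product `∏_{i} λ_i / D`. -/
noncomputable def prodCard {ι : Type u} (D : Ultrafilter ι) (lam : ι → Cardinal.{u}) :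
    Cardinal.{u + 1} :=
  Cardinal.mk (ProdQuot D lam)

/-- `μ = lim_D ⟨λ_i : i < κ⟩` : for every `β < μ`, the set `{i : β < λ_i ≤ μ}` is in `D`. -/
def IsLimD {ι : Type u} (D : Ultrafilter ι) (lam : ι → Cardinal.{u}) (μ : Cardinal.{u}) :
    Prop :=
  ∀ β < μ, {i | β < lam i ∧ lam i ≤ μ} ∈ D

/-- `D` is `(κ, g)`-weakly normal, where `g : κ → θ`. -/
def WeaklyNormalWith {ι : Type u} (D : Ultrafilter ι) (θ : Cardinal.{u})
    (g : ι → Ordinal.{u}) : Prop :=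
  (∀ i, g i < θ.ord) ∧
  (∀ ε < θ.ord, {i | ε ≤ g i} ∈ D) ∧
  (∀ f : ι → Ordinal.{u}, (∀ i, f i < g i) → ∃ j < θ.ord, {i | f i < j} ∈ D)

/-- `D` is `(κ, θ)`-weakly normal: some `g : κ → θ` witnesses weak normality. -/
def WeaklyNormal {ι : Type u} (D : Ultrafilter ι) (θ : Cardinal.{u}) : Prop :=
  ∃ g : ι → Ordinal.{u}, WeaklyNormalWith D θ g

theorem stmt_0 {ι : Type u} (κ θ la : Cardinal.{u}) (hκ : ℵ₀ ≤ κ) (hθ : ℵ₀ ≤ θ)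
    (hι : #ι = κ) (D : Ultrafilter ι)
    (μseq : Ordinal.{u} → Cardinal.{u})
    (hmono : ∀ j k : Ordinal.{u}, j < k → k < θ.ord → μseq j < μseq k)
    (hbd : ∀ j < θ.ord, μseq j ≤ la)
    (hlim : ∀ β < la, ∃ j < θ.ord, β < μseq j)
    (g : ι → Ordinal.{u}) (hg : WeaklyNormalWith D θ g)
    (lam : ι → Cardinal.{u}) (hlam : ∀ i, lam i = μseq (g i)) :
    IsLimD D lam la := by
  intro β hβ
  obtain ⟨j, hj, hβj⟩ := hlim β hβ
  have hmem : {i | j ≤ g i} ∈ D := hg.2.1 j hj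
  refine D.toFilter.mem_of_superset hmem ?_
  intro i hi
  have hgi : g i < θ.ord := hg.1 i
  have h1 : μseq j ≤ μseq (g i) := by
    have hji : j ≤ g i := hi
    rcases lt_or_eq_of_le hji with h | h
    · exact (hmono j (g i) h hgi).le
    · rw [h]
  constructor
  · rw [hlam i]; exact lt_of_lt_of_le hβj h1
  · rw [hlam i]; exact hbd (g i) hgi
end

section
/- Let θ = cf(λ) ≤ κ < λ, let D be an ultrafilter on κ, let ⟨μ_j : j < θ⟩ be an increasing continuous sequence of cardinals with limit λ, let g : κ → θ, and set λ_i = μ_{g(i)} for every i < κ; assume lim_D(⟨λ_i : i < κ⟩) = λ. If every function f with f(i) < λ_i for all i < κ admits an ordinal γ_f < λ such that {i < κ : f(i) < γ_f} ∈ D, then D is (κ,g)-weakly normal (hence (κ,θ)-weakly normal). -/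
universe u

open Cardinal Set

/-!
Write `λ_i = μ_{g(i)}`. Since `μ` is strictly increasing on `θ`, the order of indices below `θ` is
read off from the `μ`'s. If `ε < θ`, then `μ_ε < λ` (for `ε > 0` the cofinality `θ` is infinite, so
`ε + 1 < θ`), and `lim_D λ_i = λ` puts `λ_i > μ_ε`, i.e. `g(i) ≥ ε`, for `D`-almost every `i`.
If `f` is `g`-regressive, then `i ↦ μ_{f(i)}` lies in `∏ λ_i`, so it is `D`-almost everywhere
below some `γ < λ`; choosing `j < θ` with `|γ| < μ_j` gives `f(i) < j` almost everywhere.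
-/

theorem Ordinal.add_one_lt_ord_cof {o ε : Ordinal.{u}} (hε : ε < o.cof.ord) (hε0 : ε ≠ 0) :
    ε + 1 < o.cof.ord := by
  have h1 : 1 < o.cof.ord := (Order.one_le_iff_ne_zero.2 hε0).trans_lt hε
  have hinf : ℵ₀ ≤ o.cof :=
    Ordinal.aleph0_le_cof_iff.2 (by simpa using (Cardinal.lt_ord.1 h1))
  exact (Cardinal.isSuccLimit_ord hinf).succ_lt hε

section

variable {ι : Type u} {D : Ultrafilter ι} {θ la : Cardinal.{u}} {μseq : Ordinal.{u} → Cardinal.{u}}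
  {g : ι → Ordinal.{u}}

theorem IsLimD.setOf_le_mem (hμ : StrictMonoOn μseq (Iio θ.ord))
    (hlimD : IsLimD D (fun i => μseq (g i)) la) {ε : Ordinal.{u}} (hεθ : ε < θ.ord)
    (hε : μseq ε < la) : {i | ε ≤ g i} ∈ D := by
  refine Filter.mem_of_superset (hlimD (μseq ε) hε) fun i hi => ?_
  exact le_of_not_gt fun hgi => hi.1.not_gt (hμ (hgi.trans hεθ) hεθ hgi)

theorem exists_setOf_lt_mem_of_regressive (hμ : StrictMonoOn μseq (Iio θ.ord))
    (hlimseq : ∀ β < la, ∃ j < θ.ord, β < μseq j) (hgθ : ∀ i, g i < θ.ord)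
    (hbound : ∀ f : ι → Ordinal.{u}, (∀ i, f i < (μseq (g i)).ord) →
      ∃ γ < la.ord, {i | f i < γ} ∈ D)
    {f : ι → Ordinal.{u}} (hf : ∀ i, f i < g i) : ∃ j < θ.ord, {i | f i < j} ∈ D := by
  have hfθ : ∀ i, f i < θ.ord := fun i => (hf i).trans (hgθ i)
  obtain ⟨γ, hγ, hS⟩ := hbound (fun i => (μseq (f i)).ord) fun i =>
    Cardinal.ord_lt_ord.2 (hμ (hfθ i) (hgθ i) (hf i))
  obtain ⟨j, hj, hγj⟩ := hlimseq γ.card (Cardinal.lt_ord.1 hγ)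
  refine ⟨j, hj, Filter.mem_of_superset hS fun i hi => ?_⟩
  have hle : μseq (f i) ≤ γ.card := Cardinal.ord_le.1 (le_of_lt hi)
  exact (hμ.lt_iff_lt (hfθ i) hj).1 (hle.trans_lt hγj)

end

theorem stmt_4_general {ι : Type u} (θ la : Cardinal.{u}) (D : Ultrafilter ι)
    (hθ : θ = la.ord.cof)
    (μseq : Ordinal.{u} → Cardinal.{u})
    (hmono : ∀ j k : Ordinal.{u}, j < k → k < θ.ord → μseq j < μseq k)
    (hbd : ∀ j < θ.ord, μseq j ≤ la)
    (hlimseq : ∀ β < la, ∃ j < θ.ord, β < μseq j)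
    (g : ι → Ordinal.{u}) (hgθ : ∀ i, g i < θ.ord)
    (lam : ι → Cardinal.{u}) (hlam : ∀ i, lam i = μseq (g i))
    (hlimD : IsLimD D lam la)
    (hbound : ∀ f : ι → Ordinal.{u}, (∀ i, f i < (lam i).ord) →
      ∃ γ < la.ord, {i | f i < γ} ∈ D) :
    WeaklyNormalWith D θ g ∧ WeaklyNormal D θ := by
  obtain rfl : lam = fun i => μseq (g i) := funext hlam
  have hμ : StrictMonoOn μseq (Iio θ.ord) := fun j _ k hk hjk => hmono j k hjk hk
  have hW : WeaklyNormalWith D θ g := by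
    refine ⟨hgθ, fun ε hε => ?_,
      fun f hf => exists_setOf_lt_mem_of_regressive hμ hlimseq hgθ hbound hf⟩
    obtain rfl | hε0 := eq_or_ne ε 0
    · exact Filter.univ_mem' fun i => show 0 ≤ g i from zero_le
    have hsucc : ε + 1 < θ.ord := hθ ▸ Ordinal.add_one_lt_ord_cof (hθ ▸ hε) hε0
    have hμε : μseq ε < la := (hμ hε hsucc (lt_add_one ε)).trans_le (hbd _ hsucc)
    exact hlimD.setOf_le_mem hμ hε hμε
  exact ⟨hW, g, hW⟩

theorem stmt_4 {ι : Type u} (κ θ la : Cardinal.{u}) (hι : #ι = κ) (D : Ultrafilter ι)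
    (hθ : θ = la.ord.cof) (hθκ : θ ≤ κ) (hκla : κ < la)
    (μseq : Ordinal.{u} → Cardinal.{u})
    (hmono : ∀ j k : Ordinal.{u}, j < k → k < θ.ord → μseq j < μseq k)
    (hcont : ∀ j < θ.ord, Order.IsSuccLimit j → μseq j = ⨆ k : Set.Iio j, μseq k.1)
    (hbd : ∀ j < θ.ord, μseq j ≤ la)
    (hlimseq : ∀ β < la, ∃ j < θ.ord, β < μseq j)
    (g : ι → Ordinal.{u}) (hgθ : ∀ i, g i < θ.ord)
    (lam : ι → Cardinal.{u}) (hlam : ∀ i, lam i = μseq (g i))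
    (hlimD : IsLimD D lam la)
    (hbound : ∀ f : ι → Ordinal.{u}, (∀ i, f i < (lam i).ord) →
      ∃ γ < la.ord, {i | f i < γ} ∈ D) :
    WeaklyNormalWith D θ g ∧ WeaklyNormal D θ :=
  stmt_4_general θ la D hθ μseq hmono hbd hlimseq g hgθ lam hlam hlimD hbound
end

section
/- Let κ be the least cardinal such that there exists a non-principal ℵ1-complete ultrafilter on κ. Then κ is a measurable cardinal, i.e., there exists a non-principal κ-complete ultrafilter on κ. -/
universe u

open Cardinal Set

/-- A filter `F` is `μ`-complete: closed under intersections of families of fewer than `μ`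
of its members. -/
def CardComplete {S : Type u} (μ : Cardinal.{u}) (F : Filter S) : Prop :=
  ∀ s : Set (Set S), #s < μ → (∀ t ∈ s, t ∈ F) → ⋂₀ s ∈ F

/-- An ultrafilter is `ℵ₁`-complete: closed under countable intersections. -/
def Aleph1Complete {S : Type u} (D : Ultrafilter S) : Prop :=
  ∀ c : ℕ → Set S, (∀ n, c n ∈ D) → (⋂ n, c n) ∈ D

/-- The cardinal `κ` carries a non-principal `ℵ₁`-complete ultrafilter. -/
def HasNPA1CUltrafilter (κ : Cardinal.{u}) : Prop :=
  ∃ D : Ultrafilter κ.ord.ToType, (∀ x, ({x} : Set κ.ord.ToType) ∉ D) ∧ Aleph1Complete D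

/-!
If `D` is `ℵ₁`-complete but some family `s` of fewer than `κ` sets in `D` has intersection
outside `D`, send each point outside `⋂₀ s` to a member of `s` missing it. The image of `D`
under this map is a non-principal `ℵ₁`-complete ultrafilter on `s`, contradicting the
minimality of `κ`.
-/

theorem Aleph1Complete.map {α β : Type u} {D : Ultrafilter α} (hD : Aleph1Complete D)
    (f : α → β) : Aleph1Complete (D.map f) := by
  intro c hc
  rw [Ultrafilter.mem_map, preimage_iInter]
  exact hD _ fun n => Ultrafilter.mem_map.mp (hc n)

theorem Ultrafilter.singleton_notMem_map_equiv {α β : Type*} {D : Ultrafilter α}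
    (hD : ∀ x, ({x} : Set α) ∉ D) (e : α ≃ β) (y : β) : ({y} : Set β) ∉ D.map e := by
  rw [Ultrafilter.mem_map, ← e.image_symm_eq_preimage, image_singleton]
  exact hD _

theorem hasNPA1CUltrafilter_mk {α : Type u} {D : Ultrafilter α}
    (hD : ∀ x, ({x} : Set α) ∉ D) (hc : Aleph1Complete D) : HasNPA1CUltrafilter #α := by
  obtain ⟨e⟩ := Cardinal.eq.mp (mk_ord_toType #α).symm
  exact ⟨D.map e, D.singleton_notMem_map_equiv hD e, hc.map e⟩

theorem Ultrafilter.exists_singleton_notMem_map_of_sInter_notMem {α : Type*}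
    {D : Ultrafilter α} {s : Set (Set α)} (hs : ∀ t ∈ s, t ∈ D) (hns : ⋂₀ s ∉ D) :
    ∃ g : α → s, ∀ i, ({i} : Set s) ∉ D.map g := by
  have : Nonempty s := by
    refine (nonempty_iff_ne_empty.mpr ?_).to_subtype
    rintro rfl
    exact hns (sInter_empty ▸ D.univ_mem)
  let g (x : α) : s := Classical.epsilon fun i : s => x ∉ i.1
  refine ⟨g, fun i hi => ?_⟩
  have hsub : g ⁻¹' {i} ⊆ i.1ᶜ ∪ ⋂₀ s := by
    rintro x rfl
    by_cases hx : x ∈ ⋂₀ s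
    · exact Or.inr hx
    · obtain ⟨j, hj, hxj⟩ : ∃ j ∈ s, x ∉ j := by simpa [mem_sInter] using hx
      exact Or.inl (Classical.epsilon_spec (p := fun i : s => x ∉ i.1) ⟨⟨j, hj⟩, hxj⟩)
  rcases Ultrafilter.union_mem_iff.mp (D.mem_of_superset hi hsub) with hc | hI
  · exact Ultrafilter.compl_notMem_iff.mpr (hs i i.2) hc
  · exact hns hI

theorem stmt_6 (κ : Cardinal.{u}) (h : HasNPA1CUltrafilter κ)
    (hmin : ∀ κ' < κ, ¬ HasNPA1CUltrafilter κ') :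
    ∃ D : Ultrafilter κ.ord.ToType, (∀ x, ({x} : Set κ.ord.ToType) ∉ D) ∧
      CardComplete κ (D : Filter κ.ord.ToType) := by
  obtain ⟨D, hnp, hcomp⟩ := h
  refine ⟨D, hnp, fun s hs hmem => ?_⟩
  by_contra hns
  obtain ⟨g, hg⟩ := Ultrafilter.exists_singleton_notMem_map_of_sInter_notMem hmem hns
  exact hmin #s hs (hasNPA1CUltrafilter_mk hg (hcomp.map g))
end

section
/- Let A be an infinite set and let D be an ℵ0-regular ultrafilter on a cardinal τ. Then the cardinality of the ultrapower ∏_τ A / D is at least |A|^{ℵ0}. -/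
universe u

open Cardinal Set

/-- `D` is `α`-regular: there is a family `E ⊆ D` with `|E| = α` such that every index
belongs to only finitely many members of `E`. -/
def AlphaRegular {ι : Type u} (D : Ultrafilter ι) (α : Cardinal.{u}) : Prop :=
  ∃ E : Set (Set ι), (∀ e ∈ E, e ∈ D) ∧ #E = α ∧ ∀ i, {e ∈ E | i ∈ e}.Finite

/-- The cardinality of the ultrapower `∏_τ A / D`. -/
noncomputable def upowCard {ι : Type u} (D : Ultrafilter ι) (A : Type u) : Cardinal.{u} :=
  #(Quot fun f g : ι → A => {i | f i = g i} ∈ D)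

theorem stmt_7 {ι : Type u} (τ : Cardinal.{u}) (hι : #ι = τ) (D : Ultrafilter ι)
    (hreg : AlphaRegular D ℵ₀) (A : Type u) (hA : ℵ₀ ≤ #A) :
    #A ^ (ℵ₀ : Cardinal.{u}) ≤ upowCard D A := by
  classical
  obtain ⟨E, hED, hE, hfin⟩ := hreg
  -- enumerate E by ℕ (in universe u, use ULift ℕ)
  have hEequiv : Nonempty (ULift.{u} ℕ ≃ ↥E) := by
    rw [← Cardinal.eq, hE, Cardinal.mk_uLift, Cardinal.mk_nat, Cardinal.lift_aleph0]
  obtain ⟨φ⟩ := hEequiv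
  set e : ℕ → Set ι := fun n => (φ ⟨n⟩ : Set ι) with he
  have einj : Function.Injective e := by
    intro a b hab
    have : φ ⟨a⟩ = φ ⟨b⟩ := Subtype.ext hab
    simpa using φ.injective this
  have heD : ∀ n, e n ∈ D := fun n => hED _ (φ ⟨n⟩).2
  -- for each i, the set of n with i ∈ e n is finite
  have hSfin : ∀ i : ι, {n : ℕ | i ∈ e n}.Finite := by
    intro i
    have : {n : ℕ | i ∈ e n} = e ⁻¹' {x ∈ E | i ∈ x} := by
      ext n; simp [he, (φ ⟨n⟩).2]
    rw [this]
    exact (hfin i).preimage (einj.injOn)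
  -- a coding injection List (ℕ × A) ↪ A
  have hcode : Nonempty (List (ℕ × A) ↪ A) := by
    rw [← Cardinal.le_def]
    have hAinf : Infinite A := Cardinal.infinite_iff.mpr hA
    have h1 : #(List (ℕ × A)) = #(ℕ × A) := Cardinal.mk_list_eq_mk _
    rw [h1, Cardinal.mk_prod, Cardinal.mk_nat]
    simp only [Cardinal.lift_aleph0, Cardinal.lift_uzero]
    exact le_of_eq (Cardinal.aleph0_mul_eq hA)
  obtain ⟨c⟩ := hcode
  -- the finset of relevant indices
  let T : ι → Finset ℕ := fun i => (hSfin i).toFinset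
  have hT : ∀ i n, n ∈ T i ↔ i ∈ e n := by
    intro i n; simp [T, Set.Finite.mem_toFinset]
  -- the coding map
  let F : (ℕ → A) → (ι → A) := fun s i =>
    c (((T i).sort (· ≤ ·)).map fun n => (n, s n))
  -- it descends injectively to the ultrapower
  have hequiv : Equivalence fun f g : ι → A => {i | f i = g i} ∈ D := by
    constructor
    · intro f; exact Filter.univ_mem' fun i => rfl
    · intro f g h; simpa [eq_comm] using h
    · intro f g h h1 h2
      filter_upwards [h1, h2] with i hi hj
      exact hi.trans hj
  have key : Function.Injective fun s : ℕ → A =>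
      (Quot.mk (fun f g : ι → A => {i | f i = g i} ∈ D) (F s)) := by
    intro s t hst
    have hrel : {i | F s i = F t i} ∈ D :=
      (hequiv.eqvGen_iff).mp (Quot.eqvGen_exact hst)
    funext n
    by_contra hne
    have : {i | F s i = F t i} ∩ e n ∈ D := Filter.inter_mem hrel (heD n)
    obtain ⟨i, hi1, hi2⟩ := D.nonempty_of_mem this
    have hlist : (((T i).sort (· ≤ ·)).map fun m => (m, s m)) =
        (((T i).sort (· ≤ ·)).map fun m => (m, t m)) := c.injective hi1
    have hmem : n ∈ (T i).sort (· ≤ ·) := by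
      rw [Finset.mem_sort, hT]; exact hi2
    have := (List.map_eq_map_iff.mp hlist) n hmem
    exact hne (congrArg Prod.snd this)
  calc #A ^ (ℵ₀ : Cardinal.{u}) = #(ULift.{u} ℕ → A) := by
        rw [← Cardinal.power_def, Cardinal.mk_uLift, Cardinal.mk_nat,
          Cardinal.lift_aleph0]
    _ ≤ #(ℕ → A) := by
        refine Cardinal.mk_le_of_injective (f := fun g n => g ⟨n⟩) ?_
        intro f g h
        funext x
        exact congrFun h x.down
    _ ≤ upowCard D A := Cardinal.mk_le_of_injective key
end

section
/- Assume: (a) ℵ0 = cf(λ) ≤ κ < λ; (b) ⟨λ_i : i < κ⟩ is a sequence of cardinals; (c) lim_D(⟨λ_i : i < κ⟩) = λ; (d) λ is κ-strong; (e) D is an ultrafilter on κ; (f) there is a ⊆-descending sequence ⟨A_n : n < ω⟩ of members of D whose intersection does not belong to D. Then the cardinality of ∏_{i<κ} λ_i / D is not equal to λ. -/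
/-!
Since `cf λ = ω`, König's theorem yields cardinals `ν_n` whose finite products `∏_{m<n} ν_m` all
stay below `λ` while `λ < ∏_n ν_n`. As `lim_D λ̄ = λ`, the sets `A_n` may be shrunk so that
`∏_{m≤n} ν_m ≤ λ_i` for `i ∈ A_n`; then a coordinate `i` that leaves the sequence `A` at stage `n`
has room to code the first `n` terms of a sequence `η ∈ ∏_n ν_n`. Two sequences differing at stage
`n` are coded differently at every `i ∈ A_0 ∩ ⋯ ∩ A_n` outside `⋂_n A_n`, a set in `D`, so
`∏_n ν_n` injects into `∏ λ_i / D`, whose cardinality therefore exceeds `λ`.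
-/

universe u

open Cardinal Set

open Order

namespace Cardinal

theorem aleph0_le_of_cof_ord_eq_aleph0 {c : Cardinal} (h : c.ord.cof = ℵ₀) : ℵ₀ ≤ c :=
  h ▸ Ordinal.cof_ord_le c

theorem isSuccLimit_of_cof_ord_eq_aleph0 {c : Cardinal} (h : c.ord.cof = ℵ₀) : IsSuccLimit c := by
  rcases lt_aleph0_or_isRegular_or_isSingular (c := c) with hc | hc | hc
  · exact absurd (aleph0_le_of_cof_ord_eq_aleph0 h) hc.not_ge
  · rw [← hc.cof_ord, h]
    exact isSuccLimit_aleph0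
  · exact hc.isSuccLimit

theorem exists_seq_lt_le_iSup_of_cof_ord_eq_aleph0 {c : Cardinal} (h : c.ord.cof = ℵ₀) :
    ∃ μ : ℕ → Cardinal, (∀ n, μ n < c) ∧ c ≤ ⨆ n, μ n := by
  obtain ⟨f, hf⟩ := Ordinal.exists_isFundamentalSeq (o := c.ord) (by rw [h, ord_aleph0])
  refine ⟨fun n ↦ (f ⟨n, Ordinal.natCast_lt_omega0 n⟩).1.card, fun n ↦ lt_ord.1 (f _).2,
    (isSuccLimit_of_cof_ord_eq_aleph0 h).le_iff_forall_le.2 fun β hβ ↦ ?_⟩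
  obtain ⟨_, ⟨⟨i, hi⟩, rfl⟩, hle⟩ := hf.isCofinal_range ⟨β.ord, ord_lt_ord.2 hβ⟩
  obtain ⟨n, rfl⟩ := Ordinal.lt_omega0.1 hi
  exact (ord_le.1 hle).trans (le_ciSup bddAbove_of_small n)

theorem finset_prod_lt {α : Type*} {c : Cardinal} (hc : ℵ₀ ≤ c) {s : Finset α}
    {f : α → Cardinal} (hf : ∀ a ∈ s, f a < c) : ∏ a ∈ s, f a < c :=
  Finset.prod_induction f (· < c) (fun _ _ ↦ mul_lt_of_lt hc) (one_lt_aleph0.trans_le hc) hf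

theorem exists_lt_prod_of_cof_ord_eq_aleph0 {c : Cardinal} (h : c.ord.cof = ℵ₀) :
    ∃ ν : ℕ → Cardinal, (∀ n, ∏ m ∈ Finset.range n, ν m < c) ∧ c < prod ν := by
  obtain ⟨μ, hμ, hle⟩ := exists_seq_lt_le_iSup_of_cof_ord_eq_aleph0 h
  have hlimit := isSuccLimit_of_cof_ord_eq_aleph0 h
  refine ⟨fun n ↦ succ (μ n), fun n ↦ finset_prod_lt (aleph0_le_of_cof_ord_eq_aleph0 h)
    fun m _ ↦ hlimit.succ_lt (hμ m), ?_⟩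
  calc c ≤ ⨆ n, μ n := hle
    _ ≤ sum μ := iSup_le_sum μ
    _ < prod fun n ↦ succ (μ n) := sum_lt_prod _ _ fun n ↦ lt_succ (μ n)

theorem mk_pi_Iio_ord {α : Type*} (ν : α → Cardinal.{u}) :
    #(∀ a, Iio (ν a).ord) = lift.{u + 1} (prod ν) := by
  simp only [mk_pi, mk_Iio_ordinal, card_ord, lift_prod]

theorem mk_pi_fin_Iio_ord (ν : ℕ → Cardinal.{u}) (n : ℕ) :
    #(∀ m : Fin n, Iio (ν m).ord) = lift.{u + 1} (∏ m ∈ Finset.range n, ν m) := by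
  rw [mk_pi_Iio_ord (fun m : Fin n ↦ ν m), prod_eq_of_fintype, lift_lift,
    Fin.prod_univ_eq_prod_range (fun m ↦ ν m)]

end Cardinal

section FirstExit

variable {ι : Type*}

open Classical in
noncomputable def firstExit (A : ℕ → Set ι) (i : ι) : ℕ :=
  if h : ∃ n, i ∉ A n then Nat.find h else 0

theorem mem_of_lt_firstExit {A : ℕ → Set ι} {i : ι} {m : ℕ} (hm : m < firstExit A i) :
    i ∈ A m := by
  classical
  unfold firstExit at hm
  split_ifs at hm with h
  · exact not_not.1 (Nat.find_min h hm)
  · exact absurd hm (Nat.not_lt_zero m)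

theorem lt_firstExit {A : ℕ → Set ι} {i : ι} {n : ℕ} (hn : ∀ m ≤ n, i ∈ A m)
    (hi : i ∉ ⋂ k, A k) : n < firstExit A i := by
  classical
  have h : ∃ n, i ∉ A n := by simpa using hi
  rw [firstExit, dif_pos h, Nat.lt_find_iff]
  exact fun m hm ↦ not_not.2 (hn m hm)

end FirstExit

section ReducedProduct

variable {ι : Type u} {D : Ultrafilter ι} {lam : ι → Cardinal.{u}}

theorem prodEquiv_equivalence : Equivalence (prodEquiv D lam) :=
  ⟨fun _ ↦ Filter.EventuallyEq.refl _ _, Filter.EventuallyEq.symm, Filter.EventuallyEq.trans⟩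

theorem prodCard_eq_zero {i : ι} (hi : lam i = 0) : prodCard D lam = 0 := by
  have : IsEmpty (ProdFun lam) := ⟨fun f ↦ by simpa [hi] using f.2 i⟩
  exact mk_eq_zero_iff.2 ⟨Quot.ind fun f ↦ isEmptyElim f⟩

theorem lift_prod_le_prodCard {A : ℕ → Set ι} (hAD : ∀ n, A n ∈ D) (hAint : (⋂ n, A n) ∉ D)
    {ν : ℕ → Cardinal.{u}} (hν : ∀ n i, (∀ m < n, i ∈ A m) → ∏ m ∈ Finset.range n, ν m ≤ lam i) :
    lift.{u + 1} (prod ν) ≤ prodCard D lam := by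
  have E : ∀ i, (∀ m : Fin (firstExit A i), Iio (ν m).ord) ↪ Iio (lam i).ord := fun i ↦
    Classical.choice <| (le_def _ _).1 <| by
      rw [mk_pi_fin_Iio_ord, mk_Iio_ordinal, card_ord, lift_le]
      exact hν _ i fun _ ↦ mem_of_lt_firstExit
  let F : (∀ n, Iio (ν n).ord) → ProdFun lam := fun η ↦
    ⟨fun i ↦ E i fun m ↦ η m, fun i ↦ (E i _).2⟩
  rw [← mk_pi_Iio_ord]
  refine mk_le_of_injective (f := fun η ↦ (Quot.mk _ (F η) : ProdQuot D lam)) fun η η' h ↦ ?_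
  have hagree : {i | (F η).1 i = (F η').1 i} ∈ D := prodEquiv_equivalence.eqvGen_iff.1 (Quot.eq.1 h)
  funext n
  have hS : (⋂ m ∈ Iic n, A m) ∩ (⋂ k, A k)ᶜ ∩ {i | (F η).1 i = (F η').1 i} ∈ D :=
    Filter.inter_mem (Filter.inter_mem ((Filter.biInter_mem (finite_Iic n)).2 fun m _ ↦ hAD m)
      (Ultrafilter.compl_mem_iff_notMem.2 hAint)) hagree
  obtain ⟨i, ⟨hiA, hi⟩, hiF⟩ := Filter.nonempty_of_mem hS
  have hn : n < firstExit A i := lt_firstExit (by simpa using hiA) hi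
  exact congrFun ((E i).injective (Subtype.ext hiF)) ⟨n, hn⟩

end ReducedProduct

theorem stmt_13_general {ι : Type u} (la : Cardinal.{u})
    (hcf : la.ord.cof = ℵ₀)
    (lam : ι → Cardinal.{u}) (D : Ultrafilter ι)
    (hlim : IsLimD D lam la)
    (A : ℕ → Set ι) (hAD : ∀ n, A n ∈ D)
    (hAint : (⋂ n, A n) ∉ D) :
    prodCard D lam ≠ Cardinal.lift.{u + 1} la := by
  intro hcard
  by_cases hzero : ∃ i, lam i = 0
  · obtain ⟨i, hi⟩ := hzero
    rw [prodCard_eq_zero hi, eq_comm, lift_eq_zero] at hcard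
    exact (aleph0_pos.trans_le (aleph0_le_of_cof_ord_eq_aleph0 hcf)).ne' hcard
  simp only [not_exists] at hzero
  obtain ⟨ν, hνla, hlaν⟩ := exists_lt_prod_of_cof_ord_eq_aleph0 hcf
  let A' n := A n ∩ {i | ∏ m ∈ Finset.range (n + 1), ν m ≤ lam i}
  have hA'D n : A' n ∈ D := Filter.inter_mem (hAD n) <|
    Filter.mem_of_superset (hlim _ (hνla (n + 1))) fun i hi ↦ hi.1.le
  have hA'int : (⋂ n, A' n) ∉ D := fun h ↦
    hAint (Filter.mem_of_superset h (iInter_mono fun n ↦ inter_subset_left))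
  have hroom n i (hi : ∀ m < n, i ∈ A' m) : ∏ m ∈ Finset.range n, ν m ≤ lam i := by
    cases n with
    | zero => simpa using Cardinal.one_le_iff_ne_zero.2 (hzero i)
    | succ n => exact (hi n (Nat.lt_add_one n)).2
  exact (lift_strictMono hlaν).not_ge (hcard ▸ lift_prod_le_prodCard hA'D hA'int hroom)

theorem stmt_13 {ι : Type u} (κ la : Cardinal.{u}) (hι : #ι = κ)
    (hcf : la.ord.cof = ℵ₀) (hκ : ℵ₀ ≤ κ) (hκla : κ < la)
    (lam : ι → Cardinal.{u}) (D : Ultrafilter ι)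
    (hlim : IsLimD D lam la)
    (hstrong : ∀ α < la, α ^ κ < la)
    (A : ℕ → Set ι) (hAD : ∀ n, A n ∈ D) (hAdesc : ∀ n, A (n + 1) ⊆ A n)
    (hAint : (⋂ n, A n) ∉ D) :
    prodCard D lam ≠ Cardinal.lift.{u + 1} la :=
  stmt_13_general la hcf lam D hlim A hAD hAint
end

section
/- Let λ be a singular cardinal, let D be an ultrafilter on κ, and let ⟨κ_i : i < κ⟩ be a sequence of regular cardinals such that for every β < λ the set {i < κ : β < κ_i} belongs to D. Then the cardinality of ∏_{i<κ} κ_i / D is at least λ⁺. -/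
universe u

open Cardinal Set

/-! For regular `κ_i`, any family of fewer than `κ_i` members of the product (for `D`-almost all
`i`) is bounded modulo `D` by its pointwise supremum plus one. A singular `λ` is the union of
`cf λ < λ` initial segments, each of size `< λ`; bounding each segment and then the `cf λ` bounds
gives, for any `λ` members of the product, one member that is `D`-almost everywhere above all of
them and hence `D`-different from each. So the reduced product has more than `λ` elements. -/

section

variable {ι : Type u} {D : Ultrafilter ι} {kap : ι → Cardinal.{u}}

theorem prodEquiv_of_mk_eq {f g : ProdFun kap}
    (h : Quot.mk (prodEquiv D kap) f = Quot.mk _ g) : prodEquiv D kap f g := by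
  have hequiv : Equivalence (prodEquiv D kap) :=
    { refl := fun _ ↦ Filter.univ_mem' fun _ ↦ rfl
      symm := fun {f g} h ↦ by simpa only [prodEquiv, eq_comm] using h
      trans := fun hfg hgh ↦ Filter.mem_of_superset (Filter.inter_mem hfg hgh)
        fun _ hi ↦ hi.1.trans hi.2 }
  exact hequiv.eqvGen_iff.1 (Quot.eqvGen_exact h)

theorem ProdFun.exists_eventually_lt (hreg : ∀ i, (kap i).IsRegular) {J : Type u}
    (hJ : {i | #J < kap i} ∈ D) (F : J → ProdFun kap) :
    ∃ H : ProdFun kap, ∀ j, {i | (F j).1 i < H.1 i} ∈ D := by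
  refine ⟨⟨fun i ↦ if #J < kap i then ⨆ j, (F j).1 i + 1 else 0, fun i ↦ ?_⟩, fun j ↦ ?_⟩
  · dsimp only
    split_ifs with h
    · exact Ordinal.iSup_add_one_lt_of_lt_cof (by rwa [(hreg i).cof_ord]) fun j ↦ (F j).2 i
    · exact ord_pos.2 (hreg i).pos
  · refine Filter.mem_of_superset hJ fun i (hi : #J < kap i) ↦ ?_
    simp only [mem_ofPred_eq, if_pos hi]
    exact (Order.lt_add_one_iff.2 le_rfl).trans_le
      (Ordinal.le_iSup (fun j ↦ (F j).1 i + 1) j)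

theorem ProdFun.exists_eventually_lt_of_isCofinal (hreg : ∀ i, (kap i).IsRegular) {X : Type u}
    [LinearOrder X] [NoMaxOrder X] {S : Set X} (hS : IsCofinal S)
    (hSD : {i | #S < kap i} ∈ D) (hIio : ∀ x : X, {i | #(Iio x) < kap i} ∈ D)
    (F : X → ProdFun kap) : ∃ H : ProdFun kap, ∀ x, {i | (F x).1 i < H.1 i} ∈ D := by
  choose G hG using fun s : S ↦ exists_eventually_lt hreg (hIio s) fun y : Iio s.1 ↦ F y
  obtain ⟨H, hH⟩ := exists_eventually_lt hreg hSD G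
  refine ⟨H, fun x ↦ ?_⟩
  obtain ⟨y, hxy⟩ := exists_gt x
  obtain ⟨s, hs, hys⟩ := hS y
  exact Filter.mem_of_superset (Filter.inter_mem (hG ⟨s, hs⟩ ⟨x, hxy.trans_le hys⟩) (hH ⟨s, hs⟩))
    fun i hi ↦ show (F x).1 i < H.1 i from hi.1.trans hi.2

theorem ProdFun.exists_eventually_lt_of_not_isRegular (hreg : ∀ i, (kap i).IsRegular)
    {la : Cardinal.{u}} (hla : ℵ₀ ≤ la) (hsing : ¬ la.IsRegular)
    (hD : ∀ β < la, {i | β < kap i} ∈ D) (F : la.ord.ToType → ProdFun kap) :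
    ∃ H : ProdFun kap, ∀ x, {i | (F x).1 i < H.1 i} ∈ D := by
  have := Cardinal.noMaxOrder hla
  obtain ⟨S, hS, hScard⟩ := Order.exists_cof_eq la.ord.ToType
  have hcof : la.ord.cof < la := lt_of_not_ge fun h ↦ hsing ⟨hla, h⟩
  refine exists_eventually_lt_of_isCofinal hreg hS (hD _ ?_) (fun x ↦ hD _ ?_) F
  · rwa [hScard, Ordinal.cof_toType]
  · simpa using mk_Iio_lt x

theorem lift_mk_lt_prodCard (hne : Nonempty (ProdFun kap)) {X : Type u}
    (h : ∀ F : X → ProdFun kap, ∃ H : ProdFun kap, ∀ x, {i | (F x).1 i < H.1 i} ∈ D) :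
    lift.{u + 1} #X < prodCard D kap := by
  by_contra! hle
  obtain ⟨e⟩ : Nonempty (ProdQuot D kap ↪ ULift.{u + 1} X) := by
    rwa [prodCard, ← mk_uLift, le_def] at hle
  have : Nonempty (ProdQuot D kap) := hne.map (Quot.mk _)
  obtain ⟨H, hH⟩ := h fun x ↦ (Function.invFun e (ULift.up x)).out
  obtain ⟨⟨x⟩, hx⟩ := Function.invFun_surjective e.injective (Quot.mk _ H)
  have hxH : prodEquiv D kap (Function.invFun e (ULift.up x)).out H :=
    prodEquiv_of_mk_eq (by rw [← hx]; exact Quot.out_eq _)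
  obtain ⟨i, hlt, heq⟩ := Filter.nonempty_of_mem (Filter.inter_mem (hH x) hxH)
  exact hlt.ne heq

end

theorem stmt_18_general {ι : Type u} (la : Cardinal.{u})
    (hla : ℵ₀ ≤ la) (hsing : ¬ la.IsRegular)
    (D : Ultrafilter ι) (kap : ι → Cardinal.{u}) (hreg : ∀ i, (kap i).IsRegular)
    (hD : ∀ β < la, {i | β < kap i} ∈ D) :
    Cardinal.lift.{u + 1} (Order.succ la) ≤ prodCard D kap := by
  rw [lift_succ, Order.succ_le_iff, ← mk_ord_toType la]
  exact lift_mk_lt_prodCard ⟨⟨fun _ ↦ 0, fun i ↦ ord_pos.2 (hreg i).pos⟩⟩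
    (ProdFun.exists_eventually_lt_of_not_isRegular hreg hla hsing hD)

theorem stmt_18 {ι : Type u} (κ la : Cardinal.{u}) (hι : #ι = κ)
    (hla : ℵ₀ ≤ la) (hsing : ¬ la.IsRegular)
    (D : Ultrafilter ι) (kap : ι → Cardinal.{u}) (hreg : ∀ i, (kap i).IsRegular)
    (hD : ∀ β < la, {i | β < kap i} ∈ D) :
    Cardinal.lift.{u + 1} (Order.succ la) ≤ prodCard D kap :=
  stmt_18_general la hla hsing D kap hreg hD
end
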